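/- Let G be a cycle with OD-pairs L, and let σ, σ̂ be two Nash equilibria. For any user i with OD-pair ℓ who changes route between σ and σ̂ (δ(i) ≠ 0, where δ(i) = 1_{σ(i)=r_i^+} − 1_{σ̂(i)=r_i^+}), exactly one of the following holds: (1) there exists J ⊆ L with ℓ ∈ J, A_J ≠ ∅, and δ(i)·Δ_J < 0; or (2) for all J ⊆ L with ℓ ∈ J and A_J ≠ ∅, Δ_J = 0. -/

import Mathlib

/-!
Fix a user `i` who plays `+` under `σ` and `-` under `σ'`, and suppose `Δ_J ≥ 0` for every
pair set `J ∋ od i` with `A_J ≠ ∅`. Every arc `a` of either route of `i` lies in `A_{J_a}` for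
the set `J_a` of pairs whose route through `a` uses it, and its flow is `f_{J_a}^+` on a
positive arc and `f_{J_a} - f_{J_a}^+` on a negative one. So the flow weakly drops from `σ` to
`σ'` on the positive route of `i` and weakly rises on the negative one, and by monotonicity
of the costs so do the arc costs. Adding the two equilibrium inequalities of `i` (under `σ`
and under `σ'`) shows that the sum of these cost changes is `≤ 0`, so each vanishes; strict
monotonicity then gives equal flows on every such arc, i.e. `Δ_{J_a} = 0`.
-/

open scoped Classical
open MeasureTheory

/-- The positive (counterclockwise) route of the OD-pair `(o, d)` on the cycle with
vertex set `ZMod n` contains the positive arc at edge `v` (the arc from `v` to `v + 1`)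
iff `posRoute n o d v` holds. -/
def posRoute (n : ℕ) (o d v : ZMod n) : Prop := (v - o).val < (d - o).val

/-- The negative (clockwise) route of `(o, d)` contains the negative arc at edge `v`
(the arc from `v + 1` to `v`) iff `negRoute n o d v` holds. -/
def negRoute (n : ℕ) (o d v : ZMod n) : Prop := (v - d).val < (o - d).val

/-- An arc of the directed version of the cycle is a pair `(v, b)`: for `b = true` the
positive arc `v → v + 1`, for `b = false` the negative arc `v + 1 → v`.
`inRoute n o d b a` says that arc `a` lies on the route of direction `b` of the
OD-pair `(o, d)`. -/
def inRoute (n : ℕ) (o d : ZMod n) (b : Bool) (a : ZMod n × Bool) : Prop :=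
  a.2 = b ∧ (if b then posRoute n o d a.1 else negRoute n o d a.1)

/-- Flow induced on arc `a` by the strategy profile `σ` (`σ i = true` means that
user `i` chooses their positive route, `σ i = false` their negative route). -/
noncomputable def flow {I : Type} [MeasurableSpace I] (μ : Measure I) (n : ℕ)
    (od : I → ZMod n × ZMod n) (σ : I → Bool) (a : ZMod n × Bool) : ℝ :=
  (μ {i | inRoute n (od i).1 (od i).2 (σ i) a}).toReal

/-- The cost, for user `i`, of their route in direction `b`, given arc flows `f`:
the sum over the arcs of that route of the user-specific arc costs. -/
noncomputable def routeCost {I : Type} (n : ℕ) [NeZero n]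
    (c : I → ZMod n × Bool → ℝ → ℝ) (f : ZMod n × Bool → ℝ)
    (od : I → ZMod n × ZMod n) (i : I) (b : Bool) : ℝ :=
  ∑ a ∈ Finset.univ.filter (fun a : ZMod n × Bool => inRoute n (od i).1 (od i).2 b a),
    c i a (f a)

/-- `σ` is a Nash equilibrium: every user's chosen route is a minimal-cost route
given the induced flows. -/
def IsEquilibrium {I : Type} [MeasurableSpace I] (μ : Measure I) (n : ℕ) [NeZero n]
    (od : I → ZMod n × ZMod n) (c : I → ZMod n × Bool → ℝ → ℝ) (σ : I → Bool) : Prop :=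
  ∀ (i : I) (b : Bool),
    routeCost n c (flow μ n od σ) od i (σ i) ≤ routeCost n c (flow μ n od σ) od i b

theorem eq_of_strictMono_of_sum_le_sum {ι : Type*} (P N : Finset ι) (f : ι → ℝ → ℝ)
    (hf : ∀ a, StrictMono (f a)) (x y : ι → ℝ)
    (hP : ∀ a ∈ P, y a ≤ x a) (hN : ∀ a ∈ N, x a ≤ y a)
    (hx : ∑ a ∈ P, f a (x a) ≤ ∑ a ∈ N, f a (x a))
    (hy : ∑ a ∈ N, f a (y a) ≤ ∑ a ∈ P, f a (y a)) :
    (∀ a ∈ P, x a = y a) ∧ (∀ a ∈ N, x a = y a) := by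
  have hPnn : ∀ a ∈ P, 0 ≤ f a (x a) - f a (y a) :=
    fun a ha => sub_nonneg.mpr ((hf a).monotone (hP a ha))
  have hNnn : ∀ a ∈ N, 0 ≤ f a (y a) - f a (x a) :=
    fun a ha => sub_nonneg.mpr ((hf a).monotone (hN a ha))
  have htotal : ∑ a ∈ P, (f a (x a) - f a (y a)) + ∑ a ∈ N, (f a (y a) - f a (x a)) = 0 := by
    refine le_antisymm ?_ (add_nonneg (Finset.sum_nonneg hPnn) (Finset.sum_nonneg hNnn))
    simp only [Finset.sum_sub_distrib]
    linarith
  obtain ⟨hP0, hN0⟩ :=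
    (add_eq_zero_iff_of_nonneg (Finset.sum_nonneg hPnn) (Finset.sum_nonneg hNnn)).mp htotal
  refine ⟨fun a ha => (hf a).injective ?_, fun a ha => ((hf a).injective ?_).symm⟩
  · exact sub_eq_zero.mp ((Finset.sum_eq_zero_iff_of_nonneg hPnn).mp hP0 a ha)
  · exact sub_eq_zero.mp ((Finset.sum_eq_zero_iff_of_nonneg hNnn).mp hN0 a ha)

section Cycle

variable {I : Type} [MeasurableSpace I] (μ : Measure I) {n : ℕ} (od : I → ZMod n × ZMod n)

/-- `f_J^+ = pairFlow μ od σ J true`. -/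
noncomputable def pairFlow (σ : I → Bool) (J : Finset (ZMod n × ZMod n)) (b : Bool) : ℝ :=
  (μ {j | od j ∈ J ∧ σ j = b}).toReal

/-- `J_a`. -/
noncomputable def arcPairs (n : ℕ) (L : Finset (ZMod n × ZMod n)) (a : ZMod n × Bool) :
    Finset (ZMod n × ZMod n) :=
  L.filter fun ℓ => inRoute n ℓ.1 ℓ.2 a.2 a

/-- `A_J ≠ ∅`. -/
def HasExclusiveArc (n : ℕ) (L J : Finset (ZMod n × ZMod n)) : Prop :=
  ∃ a : ZMod n × Bool, ∀ ℓ ∈ L, (inRoute n ℓ.1 ℓ.2 a.2 a ↔ ℓ ∈ J)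

theorem arcPairs_eq_of_forall_iff {L J : Finset (ZMod n × ZMod n)} (hJ : J ⊆ L)
    {a : ZMod n × Bool} (ha : ∀ ℓ ∈ L, (inRoute n ℓ.1 ℓ.2 a.2 a ↔ ℓ ∈ J)) :
    arcPairs n L a = J := by
  ext ℓ
  rw [arcPairs, Finset.mem_filter]
  exact ⟨fun h => (ha ℓ h.1).mp h.2, fun h => ⟨hJ h, (ha ℓ (hJ h)).mpr h⟩⟩

theorem flow_eq_pairFlow_arcPairs {L : Finset (ZMod n × ZMod n)} (hod : ∀ j, od j ∈ L)
    (σ : I → Bool) (a : ZMod n × Bool) :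
    flow μ n od σ a = pairFlow μ od σ (arcPairs n L a) a.2 := by
  unfold flow pairFlow
  congr 2
  ext j
  obtain ⟨v, b⟩ := a
  cases b <;> cases hj : σ j <;> simp [arcPairs, inRoute, hod j, hj]

theorem pairFlow_false [IsFiniteMeasure μ] (σ : I → Bool) (J : Finset (ZMod n × ZMod n))
    (h : MeasurableSet {j | od j ∈ J ∧ σ j = true}) :
    pairFlow μ od σ J false = (μ {j | od j ∈ J}).toReal - pairFlow μ od σ J true := by
  have hset : {j | od j ∈ J ∧ σ j = false} = {j | od j ∈ J} \ {j | od j ∈ J ∧ σ j = true} := by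
    ext j; cases h : σ j <;> simp [h]
  exact (congrArg μ.real hset).trans (measureReal_sdiff (fun j hj => hj.1) h)

/-- `Δ_J = f_J^+ - f̂_J^+`. -/
noncomputable def posFlowDiff (σ σ' : I → Bool) (J : Finset (ZMod n × ZMod n)) : ℝ :=
  pairFlow μ od σ J true - pairFlow μ od σ' J true

theorem flow_sub_flow [IsFiniteMeasure μ] {L : Finset (ZMod n × ZMod n)}
    (hod : ∀ j, od j ∈ L) (σ σ' : I → Bool)
    (hmeas : ∀ J : Finset (ZMod n × ZMod n), MeasurableSet {j | od j ∈ J ∧ σ j = true})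
    (hmeas' : ∀ J : Finset (ZMod n × ZMod n), MeasurableSet {j | od j ∈ J ∧ σ' j = true})
    (a : ZMod n × Bool) :
    flow μ n od σ a - flow μ n od σ' a =
      if a.2 then posFlowDiff μ od σ σ' (arcPairs n L a)
      else -posFlowDiff μ od σ σ' (arcPairs n L a) := by
  rw [flow_eq_pairFlow_arcPairs μ od hod, flow_eq_pairFlow_arcPairs μ od hod, posFlowDiff]
  cases a.2
  · rw [pairFlow_false μ od σ _ (hmeas _), pairFlow_false μ od σ' _ (hmeas' _)]
    simp only [Bool.false_eq_true, if_false]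
    ring
  · rfl

theorem flow_eq_flow_of_posFlowDiff_nonneg [NeZero n] [IsFiniteMeasure μ]
    {L : Finset (ZMod n × ZMod n)} (hod : ∀ j, od j ∈ L) (c : I → ZMod n × Bool → ℝ → ℝ)
    (hmono : ∀ i a, StrictMono (c i a)) (σ σ' : I → Bool)
    (hmeas : ∀ J : Finset (ZMod n × ZMod n), MeasurableSet {j | od j ∈ J ∧ σ j = true})
    (hmeas' : ∀ J : Finset (ZMod n × ZMod n), MeasurableSet {j | od j ∈ J ∧ σ' j = true})
    (heq : IsEquilibrium μ n od c σ) (heq' : IsEquilibrium μ n od c σ')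
    {i : I} (hi : σ i = true) (hi' : σ' i = false)
    (hΔ : ∀ J ⊆ L, od i ∈ J → HasExclusiveArc n L J → 0 ≤ posFlowDiff μ od σ σ' J)
    {a : ZMod n × Bool} (ha : inRoute n (od i).1 (od i).2 a.2 a) :
    flow μ n od σ a = flow μ n od σ' a := by
  set route : Bool → Finset (ZMod n × Bool) :=
    fun b => Finset.univ.filter (inRoute n (od i).1 (od i).2 b)
  have mem_route {a : ZMod n × Bool} {b : Bool} (ha : a ∈ route b) :
      a.2 = b ∧ inRoute n (od i).1 (od i).2 a.2 a := by
    have ha := (Finset.mem_filter.mp ha).2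
    exact ⟨ha.1, ha.1 ▸ ha⟩
  have hΔa {a : ZMod n × Bool} (ha : inRoute n (od i).1 (od i).2 a.2 a) :
      0 ≤ posFlowDiff μ od σ σ' (arcPairs n L a) :=
    hΔ _ (Finset.filter_subset _ _) (Finset.mem_filter.mpr ⟨hod i, ha⟩)
      ⟨a, fun ℓ hℓ => by simp [arcPairs, hℓ]⟩
  have hsub := flow_sub_flow μ od hod σ σ' hmeas hmeas'
  obtain ⟨hflowP, hflowN⟩ := eq_of_strictMono_of_sum_le_sum (route true) (route false) (c i)
    (hmono i) (flow μ n od σ) (flow μ n od σ')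
    (fun a ha => by
      obtain ⟨hb, hin⟩ := mem_route ha
      have hd := hsub a
      rw [hb, if_pos rfl] at hd
      linarith [hΔa hin])
    (fun a ha => by
      obtain ⟨hb, hin⟩ := mem_route ha
      have hd := hsub a
      rw [hb, if_neg Bool.false_ne_true] at hd
      linarith [hΔa hin])
    (hi ▸ heq i false) (hi' ▸ heq' i true)
  have hmem : a ∈ route a.2 := Finset.mem_filter.mpr ⟨Finset.mem_univ _, ha⟩
  cases hb : a.2 <;> rw [hb] at hmem
  exacts [hflowN a hmem, hflowP a hmem]

theorem posFlowDiff_eq_zero_of_nonneg [NeZero n] [IsFiniteMeasure μ]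
    {L : Finset (ZMod n × ZMod n)} (hod : ∀ j, od j ∈ L) (c : I → ZMod n × Bool → ℝ → ℝ)
    (hmono : ∀ i a, StrictMono (c i a)) (σ σ' : I → Bool)
    (hmeas : ∀ J : Finset (ZMod n × ZMod n), MeasurableSet {j | od j ∈ J ∧ σ j = true})
    (hmeas' : ∀ J : Finset (ZMod n × ZMod n), MeasurableSet {j | od j ∈ J ∧ σ' j = true})
    (heq : IsEquilibrium μ n od c σ) (heq' : IsEquilibrium μ n od c σ')
    {i : I} (hi : σ i = true) (hi' : σ' i = false)
    (hΔ : ∀ J ⊆ L, od i ∈ J → HasExclusiveArc n L J → 0 ≤ posFlowDiff μ od σ σ' J) :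
    ∀ J ⊆ L, od i ∈ J → HasExclusiveArc n L J → posFlowDiff μ od σ σ' J = 0 := by
  rintro J hJ hiJ ⟨a, ha⟩
  rw [← arcPairs_eq_of_forall_iff hJ ha]
  have hd := flow_sub_flow μ od hod σ σ' hmeas hmeas' a
  rw [flow_eq_flow_of_posFlowDiff_nonneg μ od hod c hmono σ σ' hmeas hmeas' heq heq' hi hi' hΔ
    ((ha _ (hod i)).mpr hiJ), sub_self] at hd
  split_ifs at hd <;> linarith

theorem posFlowDiff_swap (σ σ' : I → Bool) (J : Finset (ZMod n × ZMod n)) :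
    posFlowDiff μ od σ' σ J = -posFlowDiff μ od σ σ' J :=
  (neg_sub _ _).symm

theorem posFlowDiff_eq_zero_of_sign_mul_nonneg [NeZero n] [IsFiniteMeasure μ]
    {L : Finset (ZMod n × ZMod n)} (hod : ∀ j, od j ∈ L) (c : I → ZMod n × Bool → ℝ → ℝ)
    (hmono : ∀ i a, StrictMono (c i a)) (σ σ' : I → Bool)
    (hmeas : ∀ J : Finset (ZMod n × ZMod n), MeasurableSet {j | od j ∈ J ∧ σ j = true})
    (hmeas' : ∀ J : Finset (ZMod n × ZMod n), MeasurableSet {j | od j ∈ J ∧ σ' j = true})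
    (heq : IsEquilibrium μ n od c σ) (heq' : IsEquilibrium μ n od c σ')
    {i : I} (hne : σ i ≠ σ' i)
    (hΔ : ∀ J ⊆ L, od i ∈ J → HasExclusiveArc n L J →
      0 ≤ ((if σ i then (1 : ℝ) else 0) - (if σ' i then 1 else 0)) * posFlowDiff μ od σ σ' J) :
    ∀ J ⊆ L, od i ∈ J → HasExclusiveArc n L J → posFlowDiff μ od σ σ' J = 0 := by
  cases hs : σ i <;> cases hs' : σ' i
  · exact absurd (hs.trans hs'.symm) hne
  · intro J hJ hiJ hA
    have hzero := posFlowDiff_eq_zero_of_nonneg μ od hod c hmono σ' σ hmeas' hmeas heq' heq hs' hs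
      (fun J hJ hiJ hA => by
        rw [posFlowDiff_swap]; simpa [hs, hs'] using hΔ J hJ hiJ hA) J hJ hiJ hA
    rwa [posFlowDiff_swap, neg_eq_zero] at hzero
  · exact posFlowDiff_eq_zero_of_nonneg μ od hod c hmono σ σ' hmeas hmeas' heq heq' hs hs'
      (fun J hJ hiJ hA => by simpa [hs, hs'] using hΔ J hJ hiJ hA)
  · exact absurd (hs.trans hs'.symm) hne

end Cycle

theorem equilibria_alternative_general (n : ℕ) [NeZero n]
    (L : Finset (ZMod n × ZMod n))
    {I : Type} [MeasurableSpace I] (μ : Measure I) [IsFiniteMeasure μ]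
    (od : I → ZMod n × ZMod n) (hod : ∀ i, od i ∈ L)
    (c : I → ZMod n × Bool → ℝ → ℝ)
    (hmono : ∀ i a, StrictMono (c i a))
    (σ σ' : I → Bool)
    (hmeas : ∀ J : Finset (ZMod n × ZMod n), MeasurableSet {i | od i ∈ J ∧ σ i = true})
    (hmeas' : ∀ J : Finset (ZMod n × ZMod n),
      MeasurableSet {i | od i ∈ J ∧ σ' i = true})
    (heq : IsEquilibrium μ n od c σ) (heq' : IsEquilibrium μ n od c σ')
    (i : I)
    (hδ : ((if σ i then (1 : ℤ) else 0) - (if σ' i then 1 else 0)) ≠ 0) :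
    Xor'
      (∃ J ⊆ L, od i ∈ J ∧
        (∃ a : ZMod n × Bool, ∀ ℓ ∈ L, (inRoute n ℓ.1 ℓ.2 a.2 a ↔ ℓ ∈ J)) ∧
        (((if σ i then (1 : ℝ) else 0) - (if σ' i then 1 else 0)) *
          ((μ {j | od j ∈ J ∧ σ j = true}).toReal -
            (μ {j | od j ∈ J ∧ σ' j = true}).toReal) < 0))
      (∀ J ⊆ L, od i ∈ J →
        (∃ a : ZMod n × Bool, ∀ ℓ ∈ L, (inRoute n ℓ.1 ℓ.2 a.2 a ↔ ℓ ∈ J)) →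
        (μ {j | od j ∈ J ∧ σ j = true}).toReal -
          (μ {j | od j ∈ J ∧ σ' j = true}).toReal = 0) := by
  refine (xor_iff_or_and_not_and _ _).mpr
    ⟨or_iff_not_imp_left.mpr fun hnone => ?_, fun ⟨⟨J, hJ, hiJ, hA, hlt⟩, hzero⟩ => ?_⟩
  · push Not at hnone
    exact posFlowDiff_eq_zero_of_sign_mul_nonneg μ od hod c hmono σ σ' hmeas hmeas' heq heq'
      (fun h => hδ (by rw [h, sub_self])) hnone
  · rw [hzero J hJ hiJ hA, mul_zero] at hlt
    exact lt_irrefl _ hlt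

/-- Let `σ, σ'` be two Nash equilibria on the cycle. For any user `i`
who changes route between the equilibria (`δ i ≠ 0`, where
`δ i = 1_{σ i = +} − 1_{σ' i = +}`), exactly one of the following holds:
(1) there is `J ⊆ L` containing the OD-pair of `i` with `A_J ≠ ∅` and `δ i · Δ_J < 0`;
(2) for all `J ⊆ L` containing the OD-pair of `i` with `A_J ≠ ∅`, `Δ_J = 0`.
Here `Δ_J = f_J^+ − f̂_J^+` and `A_J ≠ ∅` means some arc lies (in its own direction)
on the routes of exactly the pairs in `J`. -/
theorem equilibria_alternative (n : ℕ) [NeZero n] (hn : 3 ≤ n)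
    (L : Finset (ZMod n × ZMod n)) (hL : ∀ ℓ ∈ L, ℓ.1 ≠ ℓ.2)
    {I : Type} [MeasurableSpace I] (μ : Measure I) [IsFiniteMeasure μ]
    (od : I → ZMod n × ZMod n) (hod : ∀ i, od i ∈ L)
    (c : I → ZMod n × Bool → ℝ → ℝ)
    (hmono : ∀ i a, StrictMono (c i a)) (hcont : ∀ i a, Continuous (c i a))
    (hnonneg : ∀ i a x, 0 ≤ c i a x)
    (σ σ' : I → Bool)
    (hmeas : ∀ J : Finset (ZMod n × ZMod n), MeasurableSet {i | od i ∈ J ∧ σ i = true})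
    (hmeas' : ∀ J : Finset (ZMod n × ZMod n),
      MeasurableSet {i | od i ∈ J ∧ σ' i = true})
    (hm : ∀ a, MeasurableSet {i | inRoute n (od i).1 (od i).2 (σ i) a})
    (hm' : ∀ a, MeasurableSet {i | inRoute n (od i).1 (od i).2 (σ' i) a})
    (heq : IsEquilibrium μ n od c σ) (heq' : IsEquilibrium μ n od c σ')
    (i : I)
    (hδ : ((if σ i then (1 : ℤ) else 0) - (if σ' i then 1 else 0)) ≠ 0) :
    Xor'
      (∃ J ⊆ L, od i ∈ J ∧
        (∃ a : ZMod n × Bool, ∀ ℓ ∈ L, (inRoute n ℓ.1 ℓ.2 a.2 a ↔ ℓ ∈ J)) ∧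
        (((if σ i then (1 : ℝ) else 0) - (if σ' i then 1 else 0)) *
          ((μ {j | od j ∈ J ∧ σ j = true}).toReal -
            (μ {j | od j ∈ J ∧ σ' j = true}).toReal) < 0))
      (∀ J ⊆ L, od i ∈ J →
        (∃ a : ZMod n × Bool, ∀ ℓ ∈ L, (inRoute n ℓ.1 ℓ.2 a.2 a ↔ ℓ ∈ J)) →
        (μ {j | od j ∈ J ∧ σ j = true}).toReal -
          (μ {j | od j ∈ J ∧ σ' j = true}).toReal = 0) :=
  equilibria_alternative_general n L μ od hod c hmono σ σ' hmeas hmeas' heq heq' i hδ
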